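/- arXiv:math/0105242 — 3 statements merged into one kernel-verified Lean document; each statement's English description precedes it below -/
import Mathlib

section
/- Let A be an invertible l×l-matrix over a field, B an l×m-matrix, C an m×l-matrix, and D = (d_{ij}) an m×m-matrix. Let cⁱ denote the i-th row of C and b_j the j-th column of B. Let H be the m×m matrix whose (i,j)-entry is the determinant of the (l+1)×(l+1) bordered matrix [[A, b_j], [cⁱ, d_{ij}]]. Then det(H) = (det A)^{m−1} · det([[A, B], [C, D]]). -/
/-! By the Schur complement formula with a `1 × 1` corner, each bordered determinant is
`det A` times an entry of `D - C A⁻¹ B`. Hence `H = det A • (D - C A⁻¹ B)`, so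
`det H = (det A)^m det (D - C A⁻¹ B)`, while `det [[A, B], [C, D]] = det A · det (D - C A⁻¹ B)`. -/

namespace Matrix

variable {R : Type*} [CommRing R] {n p : Type*} [Fintype n] [DecidableEq n]

def borderedDets (A : Matrix n n R) (B : Matrix n p R) (C : Matrix p n R) (D : Matrix p p R) :
    Matrix p p R :=
  of fun i j => (fromBlocks A (of fun r (_ : Fin 1) => B r j) (of fun (_ : Fin 1) s => C i s)
    (of fun (_ : Fin 1) (_ : Fin 1) => D i j)).det

theorem borderedDets_eq_det_smul_schur (A : Matrix n n R) [Invertible A]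
    (B : Matrix n p R) (C : Matrix p n R) (D : Matrix p p R) :
    borderedDets A B C D = A.det • (D - C * ⅟A * B) := by
  ext i j
  rw [borderedDets, of_apply, det_fromBlocks₁₁, det_fin_one]
  simp [mul_apply, Finset.sum_mul]

end Matrix

/-- **Lemma (determinant of the matrix of bordered determinants).**
Let `A` be an invertible `l × l` matrix over a field, `B` an `l × m` matrix,
`C` an `m × l` matrix and `D = (d_{ij})` an `m × m` matrix.  Let `H` be the
`m × m` matrix whose `(i,j)` entry is the determinant of the `(l+1) × (l+1)`
bordered matrix `[[A, b_j], [cⁱ, d_{ij}]]` where `b_j` is the `j`-th column of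
`B` and `cⁱ` is the `i`-th row of `C`.  Then
`det H = (det A)^(m-1) * det [[A, B], [C, D]]`. -/
theorem det_matrix_of_bordered_dets
    {K : Type*} [Field K] {l m : ℕ}
    (A : Matrix (Fin l) (Fin l) K) (B : Matrix (Fin l) (Fin m) K)
    (C : Matrix (Fin m) (Fin l) K) (D : Matrix (Fin m) (Fin m) K)
    (hA : IsUnit A.det)
    (H : Matrix (Fin m) (Fin m) K)
    (hH : ∀ i j, H i j =
      (Matrix.fromBlocks A
        (Matrix.of fun r (_ : Fin 1) => B r j)
        (Matrix.of fun (_ : Fin 1) s => C i s)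
        (Matrix.of fun (_ : Fin 1) (_ : Fin 1) => D i j)).det) :
    H.det = A.det ^ ((m : ℤ) - 1) * (Matrix.fromBlocks A B C D).det := by
  have := A.invertibleOfIsUnitDet hA
  have hH_bordered : H = Matrix.borderedDets A B C D := Matrix.ext hH
  rw [hH_bordered, Matrix.borderedDets_eq_det_smul_schur, Matrix.det_smul,
    Matrix.det_fromBlocks₁₁, Fintype.card_fin, zpow_sub₀ hA.ne_zero, zpow_natCast, zpow_one]
  field_simp [hA.ne_zero]
end

section
/- Let K be a field, let M be a k×n matrix over K with k ≤ n whose leading k×k minor Δ := det((M_{ℓ,m})_{1≤ℓ,m≤k}) is nonzero, and let a = (a_1, …, a_n) be a row vector over K. For i = k+1, …, n, let m_i be the determinant of the (k+1)×(k+1) matrix whose first k rows are (M_{ℓ,1}, …, M_{ℓ,k}, M_{ℓ,i}) for ℓ = 1, …, k and whose last row is (a_1, …, a_k, a_i). Then for every vector v = (v_1, …, v_n) in the kernel of M (i.e., M·v = 0), one has Σ_{i=1}^{n} a_i·v_i = Σ_{i=k+1}^{n} (m_i/Δ)·v_i. -/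
/-- **Restriction of a 1-form to the kernel (Lemma on `Ω|_{V} = Σ (m_i/Δ) dx_i`).**
Let `M` be a `k × n` matrix over a field `K` (`k ≤ n`) whose leading `k × k`
minor `Δ` is nonzero, and let `a = (a_1, …, a_n)` be a row vector.  For
`i = k+1, …, n` let `m_i` be the determinant of the `(k+1) × (k+1)` matrix whose
first `k` rows are `(M_{ℓ,1}, …, M_{ℓ,k}, M_{ℓ,i})` and whose last row is
`(a_1, …, a_k, a_i)`.  Then for every `v` in the kernel of `M`,
`Σ_{i=1}^{n} a_i v_i = Σ_{i=k+1}^{n} (m_i/Δ) v_i`. -/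
theorem oneForm_restriction_kernel
    {K : Type*} [Field K] {k n : ℕ} (hkn : k ≤ n)
    (M : Matrix (Fin k) (Fin n) K)
    (hΔ : (M.submatrix id (Fin.castLE hkn)).det ≠ 0)
    (a : Fin n → K)
    (m_ : Fin n → K)
    (hm : ∀ i : Fin n, m_ i =
      (Matrix.of fun (r c : Fin (k + 1)) =>
        (fun col : Fin n =>
          if hr : (r : ℕ) < k then M ⟨(r : ℕ), hr⟩ col else a col)
        (if hc : (c : ℕ) < k then Fin.castLE hkn ⟨(c : ℕ), hc⟩ else i)).det)
    (v : Fin n → K) (hv : M.mulVec v = 0) :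
    ∑ i : Fin n, a i * v i =
      ∑ i ∈ Finset.univ.filter (fun i : Fin n => k ≤ (i : ℕ)),
        (m_ i / (M.submatrix id (Fin.castLE hkn)).det) * v i := by
  classical
  set Δ := (M.submatrix id (Fin.castLE hkn)).det with hΔdef
  let B : Fin n → Matrix (Fin (k + 1)) (Fin (k + 1)) K := fun i =>
    Matrix.of fun (r c : Fin (k + 1)) =>
      (fun col : Fin n =>
        if hr : (r : ℕ) < k then M ⟨(r : ℕ), hr⟩ col else a col)
      (if hc : (c : ℕ) < k then Fin.castLE hkn ⟨(c : ℕ), hc⟩ else i)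
  have hmB : ∀ i, m_ i = (B i).det := fun i => hm i
  let N : Fin (k + 1) → Matrix (Fin k) (Fin k) K := fun r =>
    Matrix.of fun (r' c' : Fin k) =>
      if hr : ((r.succAbove r' : Fin (k + 1)) : ℕ) < k
      then M ⟨((r.succAbove r' : Fin (k + 1)) : ℕ), hr⟩ (Fin.castLE hkn c')
      else a (Fin.castLE hkn c')
  have hsub : ∀ (i : Fin n) (r : Fin (k + 1)),
      (B i).submatrix r.succAbove (Fin.last k).succAbove = N r := by
    intro i r
    ext r' c'
    simp [B, N, Fin.succAbove_last, Fin.coe_castSucc, Fin.is_lt, Fin.eta, Fin.castLE]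
  have hNlast : N (Fin.last k) = M.submatrix id (Fin.castLE hkn) := by
    ext r' c'
    simp [N, Fin.succAbove_last, Fin.coe_castSucc, Fin.is_lt, Fin.eta]
  have hexp : ∀ i : Fin n, (B i).det =
      (∑ s : Fin k, ((-1) ^ ((s : ℕ) + k) * (N s.castSucc).det) * M s i) + Δ * a i := by
    intro i
    rw [Matrix.det_succ_column (B i) (Fin.last k), Fin.sum_univ_castSucc]
    congr 1
    · refine Finset.sum_congr rfl fun s _ => ?_
      rw [hsub]
      have hentry : B i s.castSucc (Fin.last k) = M s i := by
        simp [B, Fin.val_last, Fin.coe_castSucc, Fin.is_lt, Fin.eta]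
      rw [hentry]
      simp [Fin.coe_castSucc, Fin.val_last]
      ring
    · rw [hsub, hNlast]
      have hentry : B i (Fin.last k) (Fin.last k) = a i := by
        simp [B, Fin.val_last]
      rw [hentry]
      have : ((-1 : K)) ^ ((Fin.last k : ℕ) + (Fin.last k : ℕ)) = 1 :=
        Even.neg_one_pow ⟨k, by simp [Fin.val_last]⟩
      rw [this]
      ring
  have hzero : ∀ i : Fin n, (i : ℕ) < k → (B i).det = 0 := by
    intro i hi
    have hcast : Fin.castLE hkn ⟨(i : ℕ), hi⟩ = i := Fin.ext rfl
    refine Matrix.det_zero_of_column_eq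
      (i := (⟨(i : ℕ), hi⟩ : Fin k).castSucc) (j := Fin.last k)
      (ne_of_lt (Fin.castSucc_lt_last _)) fun r => ?_
    simp [B, Fin.coe_castSucc, Fin.val_last, hi, hcast]
  have h1 : ∀ s : Fin k, ∑ i : Fin n, M s i * v i = 0 := by
    intro s
    have := congrFun hv s
    simpa [Matrix.mulVec, dotProduct] using this
  have key : Δ * ∑ i : Fin n, a i * v i =
      ∑ i ∈ Finset.univ.filter (fun i : Fin n => k ≤ (i : ℕ)), (B i).det * v i := by
    have h2 : ∑ i : Fin n, (B i).det * v i =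
        (∑ s : Fin k, ((-1) ^ ((s : ℕ) + k) * (N s.castSucc).det) *
          ∑ i : Fin n, M s i * v i) + Δ * ∑ i : Fin n, a i * v i := by
      calc ∑ i : Fin n, (B i).det * v i
          = ∑ i : Fin n, ((∑ s : Fin k,
              ((-1) ^ ((s : ℕ) + k) * (N s.castSucc).det) * M s i) * v i
              + Δ * (a i * v i)) := by
            refine Finset.sum_congr rfl fun i _ => ?_
            rw [hexp i]; ring
        _ = _ := by
            rw [Finset.sum_add_distrib, ← Finset.mul_sum]
            congr 1
            simp_rw [Finset.sum_mul, Finset.mul_sum, mul_assoc]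
            exact Finset.sum_comm
    have h3 : ∑ i : Fin n, (B i).det * v i = Δ * ∑ i : Fin n, a i * v i := by
      rw [h2]
      simp [h1]
    rw [← h3]
    refine (Finset.sum_filter_of_ne fun i _ hne => ?_).symm
    by_contra hk
    exact hne (by rw [hzero i (lt_of_not_ge hk)]; ring)
  have hR : Δ * ∑ i ∈ Finset.univ.filter (fun i : Fin n => k ≤ (i : ℕ)),
      (m_ i / Δ) * v i =
      ∑ i ∈ Finset.univ.filter (fun i : Fin n => k ≤ (i : ℕ)), (B i).det * v i := by
    rw [Finset.mul_sum]
    refine Finset.sum_congr rfl fun i _ => ?_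
    rw [hmB i]
    field_simp
  exact mul_left_cancel₀ hΔ (key.trans hR.symm)
end

section
/- Let U ⊆ ℝⁿ (or ℂⁿ) be open, let f_1, …, f_k : U → ℝ be twice continuously differentiable and A_1, …, A_n : U → ℝ continuously differentiable, and suppose that Δ := det((∂f_ℓ/∂x_m)_{1≤ℓ,m≤k}) is nonvanishing on U. For i = k+1, …, n let m_i be the determinant of the (k+1)×(k+1) matrix whose first k rows are (∂f_ℓ/∂x_1, …, ∂f_ℓ/∂x_k, ∂f_ℓ/∂x_i), ℓ = 1, …, k, and whose last row is (A_1, …, A_k, A_i). For j = k+1, …, n and a differentiable function g on U define D_j g := ∂g/∂x_j + Σ_{ℓ=1}^{k} (−1)^{k+ℓ+1} (1/Δ) · J_{ℓ,j} · ∂g/∂x_ℓ, where J_{ℓ,j} is the Jacobian determinant of (f_1, …, f_k) with respect to the variables (x_1, …, x_{ℓ−1}, x_{ℓ+1}, …, x_k, x_j). Then for each i, j ∈ {k+1, …, n} one has D_j(m_i/Δ) = (1/Δ³) · det of the (k+2)×(k+2) matrix whose rows are (Δ, ∂Δ/∂x_1, …, ∂Δ/∂x_k, ∂Δ/∂x_j),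 then (0, ∂f_ℓ/∂x_1, …, ∂f_ℓ/∂x_k, ∂f_ℓ/∂x_j) for ℓ = 1, …, k, and finally (m_i, ∂m_i/∂x_1, …, ∂m_i/∂x_k, ∂m_i/∂x_j). -/
/-!
On the level set, `D_j` is Cramer's rule: with `κ` the cofactors of a row appended below the
`k × (k+1)` Jacobian block on the columns `x_1, …, x_k, x_j`, one has `D_j g = (∇g ⬝ κ) / Δ`,
because the last cofactor is `Δ` and the others are `±J_{ℓ,j}`. Expanding the `(k+2) × (k+2)`
determinant along its first column, whose only nonzero entries are `Δ` and `m_i`, gives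
`(Δ ∇m_i - m_i ∇Δ) ⬝ κ`, while the quotient rule gives `∇(m_i/Δ) = (Δ ∇m_i - m_i ∇Δ) / Δ²`.
-/

/-- The partial derivative `∂g/∂x_m` of a function `g` on `ℝⁿ`. -/
noncomputable def pd {n : ℕ} (g : (Fin n → ℝ) → ℝ) (m : Fin n) (x : Fin n → ℝ) : ℝ :=
  fderiv ℝ g x (Pi.single m 1)

namespace Matrix

variable {R : Type*} [CommRing R] {k : ℕ}

def lastRowCofactor (F : Fin k → Fin (k + 1) → R) (z : Fin (k + 1)) : R :=
  (-1) ^ (k + (z : ℕ)) * (of fun r c => F r (z.succAbove c)).det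

theorem lastRowCofactor_last (F : Fin k → Fin (k + 1) → R) :
    lastRowCofactor F (Fin.last k) = (of fun r c => F r c.castSucc).det := by
  simp [lastRowCofactor, ← two_mul, pow_mul]

theorem det_of_snoc (F : Fin k → Fin (k + 1) → R) (v : Fin (k + 1) → R) :
    (of (Fin.snoc F v)).det = v ⬝ᵥ lastRowCofactor F := by
  rw [det_succ_row _ (Fin.last k)]
  refine Finset.sum_congr rfl fun z _ => ?_
  have hminor : (of (Fin.snoc F v)).submatrix (Fin.last k).succAbove z.succAbove =
      of fun r c => F r (z.succAbove c) := by
    ext r c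
    simp
  rw [hminor, lastRowCofactor, of_apply, Fin.snoc_last, Fin.val_last]
  ring

theorem det_of_cons (F : Fin k → Fin (k + 1) → R) (v : Fin (k + 1) → R) :
    (of (Fin.cons v F)).det = (-1) ^ k * (of (Fin.snoc F v)).det := by
  have hrotate : (of (Fin.snoc F v)).det = (-1) ^ k * (of (Fin.cons v F)).det := by
    have hperm := det_permute (finRotate (k + 1)) (of (Fin.cons v F))
    rw [sign_finRotate, Nat.add_sub_cancel] at hperm
    rw [Fin.snoc_eq_cons_rotate]
    exact_mod_cast hperm
  rw [hrotate, ← mul_assoc, ← pow_add, ← two_mul, pow_mul, neg_one_sq, one_pow, one_mul]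

theorem det_of_bordered (a b : R) (u v : Fin (k + 1) → R) (F : Fin k → Fin (k + 1) → R) :
    (of (Fin.cons (Fin.cons a u) (Fin.snoc (fun ℓ => Fin.cons 0 (F ℓ)) (Fin.cons b v)) :
      Fin (k + 2) → Fin (k + 2) → R)).det = (a • v - b • u) ⬝ᵥ lastRowCofactor F := by
  set M : Matrix (Fin (k + 2)) (Fin (k + 2)) R :=
    of (Fin.cons (Fin.cons a u) (Fin.snoc (fun ℓ => Fin.cons 0 (F ℓ)) (Fin.cons b v)))
  have hminor₀ : M.submatrix Fin.succ Fin.succ = of (Fin.snoc F v) := by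
    ext r c
    refine Fin.lastCases ?_ (fun r => ?_) r <;> simp [M]
  have hminor₁ : M.submatrix Fin.castSucc Fin.succ = of (Fin.cons u F) := by
    ext r c
    refine Fin.cases ?_ (fun r => ?_) r <;> simp [M]
  have hcol (ℓ : Fin k) : M ℓ.castSucc.succ 0 = 0 := by simp [M]
  have hfirst : M 0 0 = a := rfl
  have hlast : M (Fin.last (k + 1)) 0 = b := by simp [M]
  rw [det_succ_column_zero, Fin.sum_univ_succ, Fin.sum_univ_castSucc]
  simp only [hfirst, hcol, hlast, Fin.succAbove_zero, Fin.succ_last, Fin.succAbove_last, hminor₀,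
    hminor₁, mul_zero, zero_mul, Finset.sum_const_zero, zero_add, det_of_cons, det_of_snoc,
    Fin.val_zero, Fin.val_succ, Fin.val_last, pow_zero, pow_succ, one_mul, sub_dotProduct,
    smul_dotProduct, smul_eq_mul]
  have hsq : ((-1 : R) ^ k) ^ 2 = 1 := by rw [← pow_mul, pow_mul', neg_one_sq, one_pow]
  linear_combination (-b * u ⬝ᵥ lastRowCofactor F) * hsq

end Matrix

theorem DifferentiableAt.matrix_det {𝕜 E ι : Type*} [NontriviallyNormedField 𝕜]
    [NormedAddCommGroup E] [NormedSpace 𝕜 E] [Fintype ι] [DecidableEq ι]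
    {M : E → Matrix ι ι 𝕜} {x : E} (hM : ∀ i j, DifferentiableAt 𝕜 (fun y => M y i j) x) :
    DifferentiableAt 𝕜 (fun y => (M y).det) x := by
  simp only [Matrix.det_apply']
  fun_prop

theorem Fin.snoc_castLE_succAbove_castSucc {k n : ℕ} (hkn : k ≤ n) (j : Fin n) (ℓ c : Fin k) :
    Fin.snoc (α := fun _ => Fin n) (Fin.castLE hkn) j (ℓ.castSucc.succAbove c) =
      if (c : ℕ) < ℓ then Fin.castLE hkn c
      else if h : (c : ℕ) + 1 < k then Fin.castLE hkn ⟨c + 1, h⟩ else j := by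
  rcases lt_or_ge (c : ℕ) ℓ with hc | hc
  · rw [Fin.succAbove_castSucc_of_lt _ _ hc, if_pos hc, Fin.snoc_castSucc]
  · rw [Fin.succAbove_castSucc_of_le _ _ hc, if_neg hc.not_gt]
    simp only [Fin.snoc]
    split_ifs with h₁ h₂ <;> rw [Fin.val_succ] at h₁ <;> first | rfl | omega

section PartialDerivatives

variable {n : ℕ}

theorem ContDiffAt.differentiableAt_pd {g : (Fin n → ℝ) → ℝ} {x : Fin n → ℝ}
    (hg : ContDiffAt ℝ 2 g x) (m : Fin n) : DifferentiableAt ℝ (pd g m) x :=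
  ((hg.fderiv_right one_add_one_eq_two.le).differentiableAt one_ne_zero).clm_apply
    (differentiableAt_const _)

theorem pd_div {g h : (Fin n → ℝ) → ℝ} {x : Fin n → ℝ} (hg : DifferentiableAt ℝ g x)
    (hh : DifferentiableAt ℝ h x) (hx : h x ≠ 0) (m : Fin n) :
    pd (fun y => g y / h y) m x = (h x * pd g m x - g x * pd h m x) / h x ^ 2 := by
  have hd : HasFDerivAt (fun y => g y * (h y)⁻¹) _ x :=
    hg.hasFDerivAt.mul ((hasDerivAt_inv hx).comp_hasFDerivAt x hh.hasFDerivAt)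
  simp only [div_eq_mul_inv, pd]
  rw [hd.fderiv]
  simp only [add_apply, smul_apply, smul_eq_mul]
  field_simp
  ring

variable {k : ℕ}

/-- The gradient of `g` at `x` in the coordinates `x_1, …, x_k, x_j`. -/
noncomputable def partialGrad (hkn : k ≤ n) (j : Fin n) (g : (Fin n → ℝ) → ℝ) (x : Fin n → ℝ) :
    Fin (k + 1) → ℝ :=
  fun z => pd g (Fin.snoc (α := fun _ => Fin n) (Fin.castLE hkn) j z) x

theorem partialGrad_div (hkn : k ≤ n) (j : Fin n) {g h : (Fin n → ℝ) → ℝ} {x : Fin n → ℝ}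
    (hg : DifferentiableAt ℝ g x) (hh : DifferentiableAt ℝ h x) (hx : h x ≠ 0) :
    partialGrad hkn j (fun y => g y / h y) x =
      (h x ^ 2)⁻¹ • (h x • partialGrad hkn j g x - g x • partialGrad hkn j h x) := by
  ext z
  simp only [partialGrad, pd_div hg hh hx, Pi.smul_apply, Pi.sub_apply, smul_eq_mul]
  ring

theorem lastRowCofactor_partialGrad_castSucc (hkn : k ≤ n) (j : Fin n)
    (f : Fin k → (Fin n → ℝ) → ℝ) (x : Fin n → ℝ) (ℓ : Fin k) :
    Matrix.lastRowCofactor (fun r => partialGrad hkn j (f r) x) ℓ.castSucc =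
      (-1) ^ (k + (ℓ : ℕ)) * (Matrix.of fun (r c : Fin k) => pd (f r)
        (if (c : ℕ) < ℓ then Fin.castLE hkn c
         else if h : (c : ℕ) + 1 < k then Fin.castLE hkn ⟨c + 1, h⟩ else j) x).det := by
  simp only [Matrix.lastRowCofactor, partialGrad, Fin.snoc_castLE_succAbove_castSucc,
    Fin.val_castSucc]

theorem lastRowCofactor_partialGrad_last (hkn : k ≤ n) (j : Fin n)
    (f : Fin k → (Fin n → ℝ) → ℝ) (x : Fin n → ℝ) :
    Matrix.lastRowCofactor (fun r => partialGrad hkn j (f r) x) (Fin.last k) =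
      (Matrix.of fun r c => pd (f r) (Fin.castLE hkn c) x).det := by
  simp [Matrix.lastRowCofactor_last, partialGrad]

end PartialDerivatives

/-- **Derivative along the level set of the coefficients of the restricted 1-form.**
Let `U ⊆ ℝⁿ` be open, `f_1, …, f_k` be `C²` on `U`, `A_1, …, A_n` be `C¹` on `U`,
and suppose the leading Jacobian minor `Δ = det(∂f_ℓ/∂x_m)_{1≤ℓ,m≤k}` does not
vanish on `U`.  For `i > k` let `m_i` be the `(k+1) × (k+1)` minor of the Jacobian
matrix augmented by the row `(A_1, …, A_n)`, on the columns `1, …, k, i`.  For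
`j > k` let `D_j g = ∂g/∂x_j + Σ_ℓ (-1)^(k+ℓ+1) Δ⁻¹ J_{ℓ,j} ∂g/∂x_ℓ`, where
`J_{ℓ,j} = ∂(f_1,…,f_k)/∂(x_1,…,x_{ℓ-1},x_{ℓ+1},…,x_k,x_j)`.  Then on `U`
`D_j (m_i/Δ)` equals `Δ⁻³` times the determinant of the `(k+2) × (k+2)` matrix
with rows `(Δ, ∂Δ/∂x_1, …, ∂Δ/∂x_k, ∂Δ/∂x_j)`, `(0, ∂f_ℓ/∂x_1, …, ∂f_ℓ/∂x_k, ∂f_ℓ/∂x_j)`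
for `ℓ = 1, …, k`, and `(m_i, ∂m_i/∂x_1, …, ∂m_i/∂x_k, ∂m_i/∂x_j)`. -/
theorem deriv_of_restricted_oneForm_coeff
    {n k : ℕ} (hkn : k ≤ n)
    (U : Set (Fin n → ℝ)) (hU : IsOpen U)
    (f : Fin k → (Fin n → ℝ) → ℝ) (A : Fin n → (Fin n → ℝ) → ℝ)
    (hf : ∀ ℓ, ContDiffOn ℝ 2 (f ℓ) U)
    (hA : ∀ i, ContDiffOn ℝ 1 (A i) U)
    (Δ : (Fin n → ℝ) → ℝ)
    (hΔdef : Δ = fun x =>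
      (Matrix.of fun (ℓ m : Fin k) => pd (f ℓ) (Fin.castLE hkn m) x).det)
    (hΔ : ∀ x ∈ U, Δ x ≠ 0)
    (m_ : Fin n → (Fin n → ℝ) → ℝ)
    (hm : ∀ i : Fin n, m_ i = fun x =>
      (Matrix.of fun (r c : Fin (k + 1)) =>
        (fun col : Fin n =>
          if hr : (r : ℕ) < k then pd (f ⟨(r : ℕ), hr⟩) col x else A col x)
        (if hc : (c : ℕ) < k then Fin.castLE hkn ⟨(c : ℕ), hc⟩ else i)).det)
    (J : Fin k → Fin n → (Fin n → ℝ) → ℝ)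
    (hJ : ∀ (ℓ : Fin k) (j : Fin n), J ℓ j = fun x =>
      (Matrix.of fun (r c : Fin k) =>
        pd (f r)
          (if (c : ℕ) < (ℓ : ℕ) then Fin.castLE hkn c
           else if h2 : (c : ℕ) + 1 < k then Fin.castLE hkn ⟨(c : ℕ) + 1, h2⟩
           else j) x).det)
    (D : Fin n → ((Fin n → ℝ) → ℝ) → (Fin n → ℝ) → ℝ)
    (hD : ∀ (j : Fin n) (g : (Fin n → ℝ) → ℝ) (x : Fin n → ℝ),
      D j g x = pd g j x +
        ∑ ℓ : Fin k, (-1 : ℝ) ^ (k + ((ℓ : ℕ) + 1) + 1) * (Δ x)⁻¹ * J ℓ j x *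
          pd g (Fin.castLE hkn ℓ) x) :
    ∀ (i j : Fin n), k ≤ (i : ℕ) → k ≤ (j : ℕ) → ∀ x ∈ U,
      D j (fun y => m_ i y / Δ y) x =
        ((Δ x) ^ 3)⁻¹ *
          (Matrix.of fun (r c : Fin (k + 2)) =>
            if hr0 : (r : ℕ) = 0 then
              (if (c : ℕ) = 0 then Δ x
               else if hc : (c : ℕ) - 1 < k then
                 pd Δ (Fin.castLE hkn ⟨(c : ℕ) - 1, hc⟩) x
               else pd Δ j x)
            else if hrk : (r : ℕ) ≤ k then
              (if (c : ℕ) = 0 then 0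
               else if hc : (c : ℕ) - 1 < k then
                 pd (f ⟨(r : ℕ) - 1, by omega⟩) (Fin.castLE hkn ⟨(c : ℕ) - 1, hc⟩) x
               else pd (f ⟨(r : ℕ) - 1, by omega⟩) j x)
            else
              (if (c : ℕ) = 0 then m_ i x
               else if hc : (c : ℕ) - 1 < k then
                 pd (m_ i) (Fin.castLE hkn ⟨(c : ℕ) - 1, hc⟩) x
               else pd (m_ i) j x)).det := by
  intro i j _ _ x hx
  have hD_eq (g : (Fin n → ℝ) → ℝ) : D j g x = partialGrad hkn j g x ⬝ᵥ
      Matrix.lastRowCofactor (fun ℓ => partialGrad hkn j (f ℓ) x) / Δ x := by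
    rw [hD, dotProduct, Fin.sum_univ_castSucc, add_div, Finset.sum_div, add_comm]
    congr 1
    · refine Finset.sum_congr rfl fun ℓ _ => ?_
      rw [lastRowCofactor_partialGrad_castSucc, hJ]
      simp only [partialGrad, Fin.snoc_castSucc]
      ring
    · rw [lastRowCofactor_partialGrad_last, ← congrFun hΔdef x, mul_div_cancel_right₀ _ (hΔ x hx)]
      simp [partialGrad]
  have hf_pd (ℓ : Fin k) (v : Fin n) : DifferentiableAt ℝ (pd (f ℓ) v) x :=
    ((hf ℓ).contDiffAt (hU.mem_nhds hx)).differentiableAt_pd v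
  have hΔ_diff : DifferentiableAt ℝ Δ x :=
    hΔdef ▸ DifferentiableAt.matrix_det fun r c => hf_pd r _
  have hm_diff : DifferentiableAt ℝ (m_ i) x := by
    refine hm i ▸ DifferentiableAt.matrix_det fun r c => ?_
    by_cases hr : (r : ℕ) < k
    · simpa only [Matrix.of_apply, hr, dite_true] using hf_pd _ _
    · simpa only [Matrix.of_apply, hr, dite_false] using
        ((hA _).contDiffAt (hU.mem_nhds hx)).differentiableAt one_ne_zero
  rw [hD_eq, partialGrad_div hkn j hm_diff hΔ_diff (hΔ x hx), smul_dotProduct,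
    ← Matrix.det_of_bordered, smul_eq_mul, div_eq_mul_inv, mul_right_comm, ← mul_inv, ← pow_succ]
  congr 2
  ext r c
  refine Fin.cases ?_ (Fin.lastCases ?_ fun ℓ => ?_) r <;>
    refine Fin.cases ?_ (Fin.lastCases ?_ fun m => ?_) c <;> simp [partialGrad] <;> rfl
end
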